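/- A maximal clique S of the parallelism relation is a top direction (its lines lie on a common plane) if and only if it satisfies condition (*): every two distinct proper lines, each sharing two distinct points with lines of S, either intersect each other or are parallel. Consequently star directions are definable in terms of the complement of W in P. -/

import Mathlib

/-- A projective space of dimension at least 3, given by its point set `S` and its
set of lines: any two points lie on a unique line, the Veblen (Pasch) axiom holds,
and there exist two disjoint lines (dimension ≥ 3). -/
structure ProjSpace (S : Type*) where
  L : Set (Set S)
  two_points : ∀ k ∈ L, ∃ a ∈ k, ∃ b ∈ k, a ≠ b
  unique_meet : ∀ k ∈ L, ∀ l ∈ L, k ≠ l → (k ∩ l).Subsingleton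
  join : ∀ a b : S, a ≠ b → ∃ k ∈ L, a ∈ k ∧ b ∈ k
  veblen : ∀ l₁ ∈ L, ∀ l₂ ∈ L, ∀ l₃ ∈ L, ∀ l₄ ∈ L, ∀ p a b c d : S,
    l₁ ≠ l₂ → p ≠ a → p ≠ b → p ≠ c → p ≠ d →
    p ∈ l₁ → a ∈ l₁ → c ∈ l₁ → p ∈ l₂ → b ∈ l₂ → d ∈ l₂ →
    a ∈ l₃ → b ∈ l₃ → c ∈ l₄ → d ∈ l₄ → (l₃ ∩ l₄).Nonempty
  dim3 : ∃ k ∈ L, ∃ l ∈ L, k ∩ l = ∅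

namespace ProjSpace

variable {S : Type*}

/-- A subspace: any line through two of its points is contained in it. -/
def IsSubspace (P : ProjSpace S) (X : Set S) : Prop :=
  ∀ k ∈ P.L, ∀ a ∈ k, ∀ b ∈ k, a ≠ b → a ∈ X → b ∈ X → k ⊆ X

/-- The subspace spanned by a point set. -/
def span (P : ProjSpace S) (X : Set S) : Set S :=
  ⋂₀ {Y | P.IsSubspace Y ∧ X ⊆ Y}

/-- A plane: the span of a line together with a point outside it. -/
def IsPlane (P : ProjSpace S) (Pl : Set S) : Prop :=
  ∃ k ∈ P.L, ∃ a, a ∉ k ∧ Pl = P.span (insert a k)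

/-- `HasIndex P W lam`: some line has exactly `lam` points in `W` and every line not
contained in `W` has at most `lam` points in `W`. -/
def HasIndex (P : ProjSpace S) (W : Set S) (lam : ℕ) : Prop :=
  (∃ k ∈ P.L, (k ∩ W).encard = (lam : ℕ∞)) ∧
    ∀ k ∈ P.L, ¬ k ⊆ W → (k ∩ W).encard ≤ (lam : ℕ∞)

/-- Three lines form a triangle: pairwise distinct, pairwise intersecting,
not concurrent. -/
def LineTriangle (P : ProjSpace S) (k₁ k₂ k₃ : Set S) : Prop :=
  k₁ ∈ P.L ∧ k₂ ∈ P.L ∧ k₃ ∈ P.L ∧ k₁ ≠ k₂ ∧ k₁ ≠ k₃ ∧ k₂ ≠ k₃ ∧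
    (k₁ ∩ k₂).Nonempty ∧ (k₁ ∩ k₃).Nonempty ∧ (k₂ ∩ k₃).Nonempty ∧
    ¬ (k₁ ∩ k₂ ∩ k₃).Nonempty

/-- Parallelism w.r.t. the horizon `W`: the lines meet, and only inside `W`. -/
def Par (W : Set S) (k₁ k₂ : Set S) : Prop :=
  (k₁ ∩ k₂).Nonempty ∧ k₁ ∩ k₂ ⊆ W

end ProjSpace

namespace ProjSpace

variable {S : Type*}

/-- A clique of the parallelism relation: a set of proper lines that are pairwise
parallel. -/
def IsParClique (P : ProjSpace S) (W : Set S) (C : Set (Set S)) : Prop :=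
  C ⊆ P.L ∧ (∀ k ∈ C, ¬ k ⊆ W) ∧ ∀ k ∈ C, ∀ l ∈ C, k ≠ l → Par W k l

/-- A maximal clique of the parallelism relation. -/
def IsMaxParClique (P : ProjSpace S) (W : Set S) (C : Set (Set S)) : Prop :=
  IsParClique P W C ∧ ∀ C', IsParClique P W C' → C ⊆ C' → C' = C

/-- A star direction: all lines of the clique pass through a common improper point. -/
def IsStarDirection (P : ProjSpace S) (W : Set S) (C : Set (Set S)) : Prop :=
  IsMaxParClique P W C ∧ ∃ a ∈ W, ∀ k ∈ C, a ∈ k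

/-- A top direction: all lines of the clique are contained in a common proper plane. -/
def IsTopDirection (P : ProjSpace S) (W : Set S) (C : Set (Set S)) : Prop :=
  IsMaxParClique P W C ∧ ∃ Pl : Set S, P.IsPlane Pl ∧ ¬ Pl ⊆ W ∧ ∀ k ∈ C, k ⊆ Pl

end ProjSpace

/-!
Any two lines of a plane meet: describing the plane spanned by a line `k` and a point `a ∉ k`
as the union of the lines through `a` that meet `k`, this follows from Veblen's axiom. Hence a
clique lying in a plane satisfies (*), since two distinct lines meeting in an improper point
are parallel.

Conversely, let `k₁ ≠ k₂` be lines of the clique and `Pl` the plane they span. If a line `k₃`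
of the clique left `Pl`, join proper points of `k₁` and `k₂` by a line `l₁ ⊆ Pl`, and join a
proper point `q₁ ∈ k₁ \ l₁` to a proper point of `k₃ \ Pl` by a line `l₂`. Then
`l₂ ∩ Pl = {q₁}`, so `l₁` and `l₂` are disjoint, against (*). The proper points needed exist
because a proper line has at most `λ` improper points out of at least `2λ + 2`.
-/

open Set

theorem one_lt_encard_diff_of_encard_inter_le {α : Type*} {s t : Set α} {n : ℕ}
    (ht : (s ∩ t).encard ≤ n) (hs : (n : ℕ∞) + 2 ≤ s.encard) : 1 < (s \ t).encard := by
  by_contra! h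
  have := hs.trans ((encard_sdiff_add_encard_inter s t).symm.trans_le (add_le_add h ht))
  norm_cast at this
  omega

theorem exists_mem_diff_notMem_of_subsingleton {α : Type*} {s t u : Set α}
    (hs : 1 < (s \ t).encard) (hu : (s ∩ u).Subsingleton) : ∃ x ∈ s, x ∉ t ∧ x ∉ u := by
  obtain ⟨x, y, hx, hy, hxy⟩ := one_lt_encard_iff.1 hs
  by_cases hxu : x ∈ u
  · exact ⟨y, hy.1, hy.2, fun hyu => hxy (hu ⟨hx.1, hxu⟩ ⟨hy.1, hyu⟩)⟩
  · exact ⟨x, hx.1, hx.2, hxu⟩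

namespace ProjSpace

variable {S : Type*} {P : ProjSpace S} {W X Y Pl k l g h : Set S} {a b u v t : S}

theorem eq_of_mem_of_mem (hk : k ∈ P.L) (hl : l ∈ P.L) (hak : a ∈ k) (hal : a ∈ l)
    (hbk : b ∈ k) (hbl : b ∈ l) (hab : a ≠ b) : k = l := by
  by_contra hkl
  exact hab (P.unique_meet k hk l hl hkl ⟨hak, hal⟩ ⟨hbk, hbl⟩)

theorem exists_mem_notMem_of_ne (hl : l ∈ P.L) (hk : k ∈ P.L) (hlk : l ≠ k) :
    ∃ a ∈ l, a ∉ k := by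
  obtain ⟨u, hu, v, hv, huv⟩ := P.two_points l hl
  by_cases huk : u ∈ k
  · exact ⟨v, hv, fun hvk => hlk (eq_of_mem_of_mem hl hk hu huk hv hvk huv)⟩
  · exact ⟨u, hu, huk⟩

theorem exists_notMem (hk : k ∈ P.L) : ∃ a, a ∉ k := by
  obtain ⟨m, hm, n, hn, hmn⟩ := P.dim3
  rcases eq_or_ne m k with rfl | hmk
  · obtain ⟨a, ha, -⟩ := P.two_points n hn
    exact ⟨a, fun ham => eq_empty_iff_forall_notMem.1 hmn a ⟨ham, ha⟩⟩
  · obtain ⟨a, -, hak⟩ := exists_mem_notMem_of_ne hm hk hmk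
    exact ⟨a, hak⟩

theorem exists_notMem_inter_or_par_iff (hg : g ∈ P.L) (hh : h ∈ P.L) (hgh : g ≠ h) :
    ((∃ x, x ∉ W ∧ x ∈ g ∩ h) ∨ Par W g h) ↔ (g ∩ h).Nonempty := by
  refine ⟨by rintro (⟨x, -, hx⟩ | ⟨hne, -⟩); exacts [⟨x, hx⟩, hne], fun ⟨x, hx⟩ => ?_⟩
  by_cases hxW : x ∈ W
  · exact Or.inr ⟨⟨x, hx⟩, fun y hy => P.unique_meet g hg h hh hgh hy hx ▸ hxW⟩
  · exact Or.inl ⟨x, hxW, hx⟩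

theorem isSubspace_span (X : Set S) : P.IsSubspace (P.span X) :=
  fun l hl a ha b hb hab haX hbX _ hx Y hY =>
    hY.1 l hl a ha b hb hab (haX Y hY) (hbX Y hY) hx

theorem subset_span : X ⊆ P.span X := fun _ hx _ hY => hY.2 hx

theorem span_subset (hY : P.IsSubspace Y) (hXY : X ⊆ Y) : P.span X ⊆ Y :=
  fun _ hx => hx Y ⟨hY, hXY⟩

theorem IsSubspace.inter_subsingleton (hX : P.IsSubspace X) (hl : l ∈ P.L) (hlX : ¬ l ⊆ X) :
    (l ∩ X).Subsingleton := by
  intro x hx y hy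
  by_contra hxy
  exact hlX (hX l hl x hx.1 y hy.1 hxy hx.2 hy.2)

def IsSecant (X l : Set S) : Prop :=
  ∃ p ∈ l, ∃ q ∈ l, p ≠ q ∧ p ∈ X ∧ q ∈ X

theorem IsSubspace.subset_of_isSecant (hX : P.IsSubspace X) (hYX : Y ⊆ X) (hl : l ∈ P.L)
    (hYl : IsSecant Y l) : l ⊆ X := by
  obtain ⟨p, hp, q, hq, hpq, hpY, hqY⟩ := hYl
  exact hX l hl p hp q hq hpq (hYX hpY) (hYX hqY)

/-- Condition (*) for `X = ⋃₀ C`, where "meet in a proper point or be parallel" is just "meet"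
(`exists_notMem_inter_or_par_iff`). -/
def ProperSecantsMeet (P : ProjSpace S) (W X : Set S) : Prop :=
  ∀ l₁ ∈ P.L, ∀ l₂ ∈ P.L, ¬ l₁ ⊆ W → ¬ l₂ ⊆ W → l₁ ≠ l₂ →
    IsSecant X l₁ → IsSecant X l₂ → (l₁ ∩ l₂).Nonempty

/-- For `a ∉ k`, a pointwise description of the plane spanned by `a` and `k`. -/
def cone (P : ProjSpace S) (a : S) (k : Set S) : Set S :=
  insert a {x | ∃ m ∈ P.L, a ∈ m ∧ x ∈ m ∧ (m ∩ k).Nonempty}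

theorem subset_cone_of_mem (hl : l ∈ P.L) (hal : a ∈ l) (hlk : (l ∩ k).Nonempty) :
    l ⊆ P.cone a k :=
  fun _ hx => Or.inr ⟨l, hl, hal, hx, hlk⟩

theorem subset_cone (hak : a ∉ k) : k ⊆ P.cone a k := by
  intro x hx
  obtain ⟨m, hm, ham, hxm⟩ := P.join a x (ne_of_mem_of_not_mem hx hak).symm
  exact subset_cone_of_mem hm ham ⟨x, hxm, hx⟩ hxm

theorem inter_nonempty_of_mem_cone (hl : l ∈ P.L) (hal : a ∈ l) (hu : u ∈ l) (hua : u ≠ a)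
    (huc : u ∈ P.cone a k) : (l ∩ k).Nonempty := by
  obtain rfl | ⟨m, hm, ham, hum, hmk⟩ := huc
  · exact (hua rfl).elim
  · rwa [eq_of_mem_of_mem hm hl ham hal hum hu hua.symm] at hmk

theorem inter_nonempty_of_two_mem_cone (hk : k ∈ P.L) (hak : a ∉ k) (hl : l ∈ P.L)
    (hal : a ∉ l) (hu : u ∈ l) (hv : v ∈ l) (huv : u ≠ v) (huc : u ∈ P.cone a k)
    (hvc : v ∈ P.cone a k) : (l ∩ k).Nonempty := by
  have hua : u ≠ a := ne_of_mem_of_not_mem hu hal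
  have hva : v ≠ a := ne_of_mem_of_not_mem hv hal
  obtain rfl | ⟨m, hm, ham, hum, s, hsm, hsk⟩ := huc
  · exact (hua rfl).elim
  obtain rfl | ⟨n, hn, han, hvn, t, htn, htk⟩ := hvc
  · exact (hva rfl).elim
  have hmn : m ≠ n := by
    rintro rfl
    exact hal (eq_of_mem_of_mem hm hl hum hu hvn hv huv ▸ ham)
  exact P.veblen m hm n hn l hl k hk a u v s t hmn hua.symm hva.symm
    (ne_of_mem_of_not_mem hsk hak).symm (ne_of_mem_of_not_mem htk hak).symm
    ham hum hsm han hvn htn hu hv hsk htk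

theorem subset_cone_of_notMem (hk : k ∈ P.L) (hl : l ∈ P.L) (hal : a ∉ l) (hu : u ∈ l)
    (huk : u ∉ k) (huc : u ∈ P.cone a k) (ht : t ∈ l) (htk : t ∈ k) : l ⊆ P.cone a k := by
  intro x hx
  rcases eq_or_ne x u with rfl | hxu
  · exact huc
  have hua : u ≠ a := ne_of_mem_of_not_mem hu hal
  obtain rfl | ⟨m, hm, ham, hum, s, hsm, hsk⟩ := huc
  · exact (hua rfl).elim
  obtain ⟨n, hn, han, hxn⟩ := P.join a x (ne_of_mem_of_not_mem hx hal).symm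
  have hml : m ≠ l := fun hml => hal (hml ▸ ham)
  have hkn : (k ∩ n).Nonempty :=
    P.veblen m hm l hl k hk n hn u s t a x hml (ne_of_mem_of_not_mem hsk huk).symm
      (ne_of_mem_of_not_mem htk huk).symm hua hxu.symm hum hsm ham hu ht hx hsk htk han hxn
  exact subset_cone_of_mem hn han (inter_comm k n ▸ hkn) hxn

theorem isSubspace_cone (hk : k ∈ P.L) (hak : a ∉ k) : P.IsSubspace (P.cone a k) := by
  intro l hl u hu v hv huv huc hvc
  by_cases hal : a ∈ l
  · obtain ⟨w, hw, hwc, hwa⟩ : ∃ w ∈ l, w ∈ P.cone a k ∧ w ≠ a := by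
      rcases eq_or_ne u a with rfl | hua
      · exact ⟨v, hv, hvc, huv.symm⟩
      · exact ⟨u, hu, huc, hua⟩
    exact subset_cone_of_mem hl hal (inter_nonempty_of_mem_cone hl hal hw hwa hwc)
  rcases eq_or_ne l k with rfl | hlk
  · exact subset_cone hak
  obtain ⟨t, htl, htk⟩ := inter_nonempty_of_two_mem_cone hk hak hl hal hu hv huv huc hvc
  obtain ⟨w, hw, hwk, hwc⟩ : ∃ w ∈ l, w ∉ k ∧ w ∈ P.cone a k := by
    by_cases huk : u ∈ k
    · exact ⟨v, hv, fun hvk => hlk (eq_of_mem_of_mem hl hk hu huk hv hvk huv), hvc⟩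
    · exact ⟨u, hu, huk, huc⟩
  exact subset_cone_of_notMem hk hl hal hw hwk hwc htl htk

theorem span_insert_subset_cone (hk : k ∈ P.L) (hak : a ∉ k) :
    P.span (insert a k) ⊆ P.cone a k :=
  span_subset (isSubspace_cone hk hak) (insert_subset_iff.2 ⟨mem_insert a _, subset_cone hak⟩)

theorem inter_nonempty_of_subset_span_insert (hk : k ∈ P.L) (hak : a ∉ k) (hg : g ∈ P.L)
    (hgPl : g ⊆ P.span (insert a k)) : (g ∩ k).Nonempty := by
  have hgc := hgPl.trans (span_insert_subset_cone hk hak)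
  obtain ⟨u, hu, v, hv, huv⟩ := P.two_points g hg
  by_cases hag : a ∈ g
  · rcases eq_or_ne u a with rfl | hua
    · exact inter_nonempty_of_mem_cone hg hag hv huv.symm (hgc hv)
    · exact inter_nonempty_of_mem_cone hg hag hu hua (hgc hu)
  · exact inter_nonempty_of_two_mem_cone hk hak hg hag hu hv huv (hgc hu) (hgc hv)

theorem inter_nonempty_of_mem_of_subset_span_insert (hk : k ∈ P.L) (hak : a ∉ k)
    (hg : g ∈ P.L) (hh : h ∈ P.L) (hgPl : g ⊆ P.span (insert a k))
    (hhPl : h ⊆ P.span (insert a k)) (hag : a ∈ g) (hah : a ∉ h) : (g ∩ h).Nonempty := by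
  obtain ⟨s, hsg, hsk⟩ := inter_nonempty_of_subset_span_insert hk hak hg hgPl
  rcases eq_or_ne h k with rfl | hhk
  · exact ⟨s, hsg, hsk⟩
  obtain ⟨t, hth, htk⟩ := inter_nonempty_of_subset_span_insert hk hak hh hhPl
  obtain ⟨b, hbh, hbt⟩ : ∃ b ∈ h, b ≠ t := by
    obtain ⟨u, hu, v, hv, huv⟩ := P.two_points h hh
    rcases eq_or_ne u t with rfl | hut
    · exact ⟨v, hv, huv.symm⟩
    · exact ⟨u, hu, hut⟩
  by_cases hbg : b ∈ g
  · exact ⟨b, hbg, hbh⟩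
  have hbk : b ∉ k := fun hbk => hbt (P.unique_meet h hh k hk hhk ⟨hbh, hbk⟩ ⟨hth, htk⟩)
  have hba : b ≠ a := ne_of_mem_of_not_mem hbh hah
  obtain ⟨n, hn, han, hbn⟩ := P.join a b hba.symm
  have hnPl : n ⊆ P.span (insert a k) :=
    isSubspace_span _ n hn a han b hbn hba.symm (subset_span (mem_insert a k)) (hhPl hbh)
  obtain ⟨p, hpn, hpk⟩ := inter_nonempty_of_subset_span_insert hk hak hn hnPl
  have hps : p ≠ s := by
    rintro rfl
    exact hbg (eq_of_mem_of_mem hn hg han hag hpn hsg (ne_of_mem_of_not_mem hpk hak).symm ▸ hbn)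
  have hpt : p ≠ t := by
    rintro rfl
    exact hah (eq_of_mem_of_mem hn hh hbn hbh hpn hth hbt ▸ han)
  exact P.veblen n hn k hk g hg h hh p a s b t (fun hnk => hak (hnk ▸ han))
    (ne_of_mem_of_not_mem hpk hak) hps (ne_of_mem_of_not_mem hpk hbk) hpt
    hpn han hbn hpk hsk htk hag hsg hbh hth

theorem IsPlane.isSubspace (hPl : P.IsPlane Pl) : P.IsSubspace Pl := by
  obtain ⟨k, -, a, -, rfl⟩ := hPl
  exact isSubspace_span _

theorem IsPlane.inter_nonempty (hPl : P.IsPlane Pl) (hg : g ∈ P.L) (hh : h ∈ P.L)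
    (hgPl : g ⊆ Pl) (hhPl : h ⊆ Pl) : (g ∩ h).Nonempty := by
  obtain ⟨k, hk, a, hak, rfl⟩ := hPl
  by_cases hag : a ∈ g
  · by_cases hah : a ∈ h
    · exact ⟨a, hag, hah⟩
    · exact inter_nonempty_of_mem_of_subset_span_insert hk hak hg hh hgPl hhPl hag hah
  by_cases hah : a ∈ h
  · exact inter_comm h g ▸
      inter_nonempty_of_mem_of_subset_span_insert hk hak hh hg hhPl hgPl hah hag
  have hjoin : ∀ e ∈ g, ∃ m ∈ P.L, a ∈ m ∧ e ∈ m ∧ (m ∩ h).Nonempty := by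
    intro e he
    have hea : e ≠ a := ne_of_mem_of_not_mem he hag
    obtain ⟨m, hm, ham, hem⟩ := P.join a e hea.symm
    have hmPl : m ⊆ P.span (insert a k) :=
      isSubspace_span _ m hm a ham e hem hea.symm (subset_span (mem_insert a k)) (hgPl he)
    exact ⟨m, hm, ham, hem,
      inter_nonempty_of_mem_of_subset_span_insert hk hak hm hh hmPl hhPl ham hah⟩
  obtain ⟨e₁, he₁, e₂, he₂, he⟩ := P.two_points g hg
  obtain ⟨m₁, hm₁, ham₁, he₁m₁, r₁, hr₁m₁, hr₁h⟩ := hjoin e₁ he₁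
  obtain ⟨m₂, hm₂, ham₂, he₂m₂, r₂, hr₂m₂, hr₂h⟩ := hjoin e₂ he₂
  have hm : m₁ ≠ m₂ := by
    rintro rfl
    exact hag (eq_of_mem_of_mem hm₁ hg he₁m₁ he₁ he₂m₂ he₂ he ▸ ham₁)
  exact P.veblen m₁ hm₁ m₂ hm₂ g hg h hh a e₁ e₂ r₁ r₂ hm
    (ne_of_mem_of_not_mem he₁ hag).symm (ne_of_mem_of_not_mem he₂ hag).symm
    (ne_of_mem_of_not_mem hr₁h hah).symm (ne_of_mem_of_not_mem hr₂h hah).symm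
    ham₁ he₁m₁ hr₁m₁ ham₂ he₂m₂ hr₂m₂ he₁ he₂ hr₁h hr₂h

variable {C : Set (Set S)} {k₁ k₂ k₃ : Set S}

theorem IsMaxParClique.nonempty (hC : IsMaxParClique P W C) (hk : k ∈ P.L) (hkW : ¬ k ⊆ W) :
    C.Nonempty := by
  rw [nonempty_iff_ne_empty]
  rintro rfl
  have hclique : IsParClique P W {k} :=
    ⟨singleton_subset_iff.2 hk, by simpa using hkW,
      fun k₁ h₁ k₂ h₂ hne => (hne (h₁.trans h₂.symm)).elim⟩
  exact singleton_ne_empty k (hC.2 {k} hclique (empty_subset _))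

theorem IsParClique.subset_of_properSecantsMeet (hC : IsParClique P W C)
    (hC2 : ∀ k ∈ C, 1 < (k \ W).encard) (hmeet : P.ProperSecantsMeet W (⋃₀ C))
    (hPl : P.IsSubspace Pl) (hk₁ : k₁ ∈ C) (hk₂ : k₂ ∈ C) (h21 : k₂ ≠ k₁)
    (hk₁Pl : k₁ ⊆ Pl) (hk₂Pl : k₂ ⊆ Pl) (hk₃ : k₃ ∈ C) : k₃ ⊆ Pl := by
  by_contra hk₃Pl
  obtain ⟨hCL, hCW, hpar⟩ := hC
  obtain ⟨p₁, hp₁, hp₁W⟩ := not_subset.1 (hCW k₁ hk₁)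
  obtain ⟨p₂, hp₂, hp₂W⟩ := not_subset.1 (hCW k₂ hk₂)
  have hp₂k₁ : p₂ ∉ k₁ := fun hp₂k₁ => hp₂W ((hpar k₂ hk₂ k₁ hk₁ h21).2 ⟨hp₂, hp₂k₁⟩)
  have hp : p₁ ≠ p₂ := ne_of_mem_of_not_mem hp₁ hp₂k₁
  obtain ⟨l₁, hl₁, hp₁l₁, hp₂l₁⟩ := P.join p₁ p₂ hp
  have hl₁Pl : l₁ ⊆ Pl := hPl l₁ hl₁ p₁ hp₁l₁ p₂ hp₂l₁ hp (hk₁Pl hp₁) (hk₂Pl hp₂)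
  obtain ⟨q₁, hq₁, hq₁W, hq₁l₁⟩ := exists_mem_diff_notMem_of_subsingleton (hC2 k₁ hk₁)
    (P.unique_meet k₁ (hCL hk₁) l₁ hl₁ fun h => hp₂k₁ (h ▸ hp₂l₁))
  obtain ⟨q₃, hq₃, hq₃W, hq₃Pl⟩ := exists_mem_diff_notMem_of_subsingleton (hC2 k₃ hk₃)
    (hPl.inter_subsingleton (hCL hk₃) hk₃Pl)
  have hq : q₁ ≠ q₃ := fun h => hq₃Pl (h ▸ hk₁Pl hq₁)
  obtain ⟨l₂, hl₂, hq₁l₂, hq₃l₂⟩ := P.join q₁ q₃ hq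
  obtain ⟨x, hxl₁, hxl₂⟩ := hmeet l₁ hl₁ l₂ hl₂ (fun h => hp₁W (h hp₁l₁))
    (fun h => hq₁W (h hq₁l₂)) (fun h => hq₁l₁ (h ▸ hq₁l₂))
    ⟨p₁, hp₁l₁, p₂, hp₂l₁, hp, ⟨k₁, hk₁, hp₁⟩, ⟨k₂, hk₂, hp₂⟩⟩
    ⟨q₁, hq₁l₂, q₃, hq₃l₂, hq, ⟨k₁, hk₁, hq₁⟩, ⟨k₃, hk₃, hq₃⟩⟩
  have hxq₁ : x = q₁ := hPl.inter_subsingleton hl₂ (fun h => hq₃Pl (h hq₃l₂))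
    ⟨hxl₂, hl₁Pl hxl₁⟩ ⟨hq₁l₂, hk₁Pl hq₁⟩
  exact hq₁l₁ (hxq₁ ▸ hxl₁)

theorem IsParClique.exists_plane_of_properSecantsMeet (hC : IsParClique P W C)
    (hC2 : ∀ k ∈ C, 1 < (k \ W).encard) (hmeet : P.ProperSecantsMeet W (⋃₀ C)) (hk₁ : k₁ ∈ C) :
    ∃ Pl, P.IsPlane Pl ∧ ∀ k ∈ C, k ⊆ Pl := by
  have hk₁L := hC.1 hk₁
  by_cases hsingle : ∀ k ∈ C, k = k₁
  · obtain ⟨a, hak⟩ := exists_notMem hk₁L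
    exact ⟨_, ⟨k₁, hk₁L, a, hak, rfl⟩,
      fun k hk => hsingle k hk ▸ (subset_insert a k₁).trans subset_span⟩
  push Not at hsingle
  obtain ⟨k₂, hk₂, h21⟩ := hsingle
  obtain ⟨a, hak₂, hak₁⟩ := exists_mem_notMem_of_ne (hC.1 hk₂) hk₁L h21
  obtain ⟨⟨w, hwk₂, hwk₁⟩, -⟩ := hC.2.2 k₂ hk₂ k₁ hk₁ h21
  have hk₁Pl : k₁ ⊆ P.span (insert a k₁) := (subset_insert a k₁).trans subset_span
  have hk₂Pl : k₂ ⊆ P.span (insert a k₁) :=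
    isSubspace_span _ k₂ (hC.1 hk₂) w hwk₂ a hak₂ (ne_of_mem_of_not_mem hwk₁ hak₁)
      (hk₁Pl hwk₁) (subset_span (mem_insert a k₁))
  exact ⟨_, ⟨k₁, hk₁L, a, hak₁, rfl⟩, fun k₃ hk₃ =>
    hC.subset_of_properSecantsMeet hC2 hmeet (isSubspace_span _) hk₁ hk₂ h21 hk₁Pl hk₂Pl hk₃⟩

end ProjSpace

open ProjSpace in
theorem top_direction_characterization_general {S : Type*} (P : ProjSpace S) (W : Set S)
    (lam : ℕ) (hind : P.HasIndex W lam)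
    (hsize : ∀ k ∈ P.L, 2 * (lam : ℕ∞) + 2 ≤ k.encard)
    (C : Set (Set S)) (hC : IsMaxParClique P W C) :
    ((∀ l₁ ∈ P.L, ∀ l₂ ∈ P.L, ¬ l₁ ⊆ W → ¬ l₂ ⊆ W → l₁ ≠ l₂ →
        (∃ p ∈ l₁, ∃ q ∈ l₁, p ≠ q ∧ p ∈ ⋃₀ C ∧ q ∈ ⋃₀ C) →
        (∃ p ∈ l₂, ∃ q ∈ l₂, p ≠ q ∧ p ∈ ⋃₀ C ∧ q ∈ ⋃₀ C) →
        ((∃ x : S, x ∉ W ∧ x ∈ l₁ ∩ l₂) ∨ Par W l₁ l₂)) ↔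
      (∃ Pl : Set S, P.IsPlane Pl ∧ ¬ Pl ⊆ W ∧ ∀ k ∈ C, k ⊆ Pl)) := by
  have hlarge : ∀ k ∈ P.L, (k ∩ W).encard ≤ lam → 1 < (k \ W).encard := fun k hk hkW =>
    one_lt_encard_diff_of_encard_inter_le hkW
      (le_trans (by norm_cast; omega : (lam : ℕ∞) + 2 ≤ 2 * lam + 2) (hsize k hk))
  constructor
  · intro hstar
    obtain ⟨k, hk, hkWcard⟩ := hind.1
    have hkW : ¬ k ⊆ W :=
      sdiff_nonempty.1 (encard_pos.1 (zero_lt_one.trans (hlarge k hk hkWcard.le)))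
    obtain ⟨k₁, hk₁⟩ := hC.nonempty hk hkW
    obtain ⟨hCL, hCW, -⟩ := hC.1
    obtain ⟨Pl, hPl, hCPl⟩ := hC.1.exists_plane_of_properSecantsMeet
      (fun k hk => hlarge k (hCL hk) (hind.2 k (hCL hk) (hCW k hk)))
      (fun l₁ hl₁ l₂ hl₂ h₁W h₂W hne h₁ h₂ => (exists_notMem_inter_or_par_iff hl₁ hl₂ hne).1
        (hstar l₁ hl₁ l₂ hl₂ h₁W h₂W hne h₁ h₂)) hk₁
    exact ⟨Pl, hPl, fun hPlW => hCW k₁ hk₁ ((hCPl k₁ hk₁).trans hPlW), hCPl⟩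
  · rintro ⟨Pl, hPl, -, hCPl⟩ l₁ hl₁ l₂ hl₂ - - hne h₁ h₂
    have hCPl : ⋃₀ C ⊆ Pl := sUnion_subset hCPl
    exact (exists_notMem_inter_or_par_iff hl₁ hl₂ hne).2 (hPl.inter_nonempty hl₁ hl₂
      (hPl.isSubspace.subset_of_isSecant hCPl hl₁ h₁)
      (hPl.isSubspace.subset_of_isSecant hCPl hl₂ h₂))

open ProjSpace in
/-- a maximal parallelism clique is a top direction iff it satisfies
condition (*): any two distinct proper lines, each sharing two distinct points with
lines of the clique, intersect in a proper point or are parallel. -/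
theorem top_direction_characterization {S : Type*} (P : ProjSpace S) (W : Set S)
    (lam : ℕ) (hlam : 0 < lam) (hind : P.HasIndex W lam)
    (hsize : ∀ k ∈ P.L, 2 * (lam : ℕ∞) + 2 ≤ k.encard)
    (C : Set (Set S)) (hC : IsMaxParClique P W C) :
    ((∀ l₁ ∈ P.L, ∀ l₂ ∈ P.L, ¬ l₁ ⊆ W → ¬ l₂ ⊆ W → l₁ ≠ l₂ →
        (∃ p ∈ l₁, ∃ q ∈ l₁, p ≠ q ∧ p ∈ ⋃₀ C ∧ q ∈ ⋃₀ C) →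
        (∃ p ∈ l₂, ∃ q ∈ l₂, p ≠ q ∧ p ∈ ⋃₀ C ∧ q ∈ ⋃₀ C) →
        ((∃ x : S, x ∉ W ∧ x ∈ l₁ ∩ l₂) ∨ Par W l₁ l₂)) ↔
      (∃ Pl : Set S, P.IsPlane Pl ∧ ¬ Pl ⊆ W ∧ ∀ k ∈ C, k ⊆ Pl)) :=
  top_direction_characterization_general P W lam hind hsize C hC
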